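/- Let P be a class of finite metric spaces that is closed under isometry (if M ∈ P and N is isometric to M then N ∈ P) and hereditary (if M ∈ P and N is a subspace of M then N ∈ P). Suppose there exists a finite metric space M₀, all of whose distances between distinct points lie in {1,2}, with M₀ ∉ P. Then there exists a constant C > 0, depending only on the cardinality of M₀, such that for arbitrarily large n there exists an n-point metric space M_n with the property that every subspace S ⊆ M_n with |S| ≥ C·log n is not in P. -/

import Mathlib

/-!
Colour the pairs of points of `Fin n` at random and put `d x y = 1` or `2` according to the
colour. Heredity and isometry invariance reduce the theorem to finding a colouring in which
every set of `≈ C log n` points contains an induced copy of the colour pattern of `M₀`.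
Copies are grown one point at a time: if every set of `k` points contains a copy of the first
`j` points of the pattern, then a set of `k + jK + K` points contains `K` disjoint such copies
and `K` further points, and one of these points completes one of the copies unless an
obstruction occurs. An obstruction consists of `K²` independent events of probability
`1 - 2⁻ʲ` each, and there are at most `n^((j+1)K)` candidates for it, so for
`K ≈ 2m log n / -log(1 - 2⁻ᵐ)` some colouring has no obstruction at any level `j < m`.
-/

/-- `d` is a metric (distance function) on `α`. -/
def IsMetricDist {α : Type*} (d : α → α → ℝ) : Prop :=
  (∀ x y, d x y = 0 ↔ x = y) ∧ (∀ x y, d x y = d y x) ∧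
    (∀ x y z, d x z ≤ d x y + d y z)

open Finset Function

namespace BoolCube

variable {ε : Type*} [Fintype ε] [DecidableEq ε]

open scoped Classical in
noncomputable def density (p : (ε → Bool) → Prop) : ℝ :=
  #{c | p c} / 2 ^ Fintype.card ε

theorem card_filter_and_mul {p q : (ε → Bool) → Prop} [DecidablePred p] [DecidablePred q]
    {A B : Set ε} (hp : DependsOn p A) (hq : DependsOn q B) (hAB : Disjoint A B) :
    #{c | p c ∧ q c} * 2 ^ Fintype.card ε = #{c | p c} * #{c | q c} := by
  classical
  -- `(c₁, c₂) ↦ (c₁ on A and c₂ off A, c₂ on A and c₁ off A)` is an involution exchanging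
  -- `{p} ×ˢ {q}` and `{p ∧ q} ×ˢ univ`.
  let merge : (ε → Bool) → (ε → Bool) → ε → Bool := fun c₁ c₂ => A.piecewise c₁ c₂
  have merge_A : ∀ c₁ c₂, ∀ x ∈ A, merge c₁ c₂ x = c₁ x := fun c₁ c₂ x hx => by simp [merge, hx]
  have merge_B : ∀ c₁ c₂, ∀ x ∈ B, merge c₁ c₂ x = c₂ x := fun c₁ c₂ x hx => by
    simp [merge, hAB.notMem_of_mem_right hx]
  have merge_merge : ∀ c₁ c₂ c₃ c₄, merge (merge c₁ c₂) (merge c₃ c₄) = merge c₁ c₄ := by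
    intro c₁ c₂ c₃ c₄; funext x; by_cases hx : x ∈ A <;> simp [merge, hx]
  have merge_self : ∀ c, merge c c = c := fun c => by simp [merge]
  let swap : (ε → Bool) × (ε → Bool) → (ε → Bool) × (ε → Bool) :=
    fun x => (merge x.1 x.2, merge x.2 x.1)
  have swap_swap : ∀ x, swap (swap x) = x := fun x => by simp [swap, merge_merge, merge_self]
  have hcard : #((univ.filter p) ×ˢ (univ.filter q)) =
      #((univ.filter fun c => p c ∧ q c) ×ˢ (univ : Finset (ε → Bool))) := by
    refine card_nbij' swap swap ?_ ?_ (fun x _ => swap_swap x) (fun x _ => swap_swap x)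
    · rintro ⟨c₁, c₂⟩ h
      simp only [coe_product, coe_filter, mem_univ, true_and, Set.mem_prod,
        Set.mem_ofPred_eq, coe_univ, Set.mem_univ, and_true] at h ⊢
      exact ⟨(hp (merge_A c₁ c₂)).mpr h.1, (hq (merge_B c₁ c₂)).mpr h.2⟩
    · rintro ⟨c₁, c₂⟩ h
      simp only [coe_product, coe_filter, mem_univ, true_and, Set.mem_prod,
        Set.mem_ofPred_eq, coe_univ, Set.mem_univ, and_true] at h ⊢
      exact ⟨(hp (merge_A c₁ c₂)).mpr h.1, (hq (merge_B c₂ c₁)).mpr h.2⟩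
  rw [card_product, card_product, card_univ, Fintype.card_fun, Fintype.card_bool] at hcard
  rw [hcard, mul_comm]

theorem density_and {p q : (ε → Bool) → Prop} {A B : Set ε} (hp : DependsOn p A)
    (hq : DependsOn q B) (hAB : Disjoint A B) :
    density (fun c => p c ∧ q c) = density p * density q := by
  classical
  have h := card_filter_and_mul hp hq hAB
  simp only [density]
  rw [div_mul_div_comm, div_eq_div_iff (by positivity) (by positivity)]
  have h' : (#{c | p c ∧ q c} : ℝ) * 2 ^ Fintype.card ε = #{c | p c} * #{c | q c} := by
    exact_mod_cast h
  rw [← h']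
  ring

theorem density_forall {ι : Type*} {p : ι → (ε → Bool) → Prop} {A : ι → Set ε} (I : Finset ι)
    (hA : (I : Set ι).PairwiseDisjoint A) (hp : ∀ i ∈ I, DependsOn (p i) (A i)) :
    density (fun c => ∀ i ∈ I, p i c) = ∏ i ∈ I, density (p i) := by
  classical
  induction I using Finset.induction_on with
  | empty => simp [density]
  | insert a I ha ih =>
    have hI : DependsOn (fun c => ∀ i ∈ I, p i c) (⋃ i ∈ I, A i) := fun c c' h => by
      simp only [eq_iff_iff]
      refine forall₂_congr fun i hi => ?_
      rw [hp i (mem_insert_of_mem hi) fun x hx => h x (Set.mem_biUnion hi hx)]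
    have hdisj : Disjoint (A a) (⋃ i ∈ I, A i) := by
      refine Set.disjoint_iUnion₂_right.mpr fun i hi => hA (by simp) (by simp [hi]) ?_
      rintro rfl; exact ha hi
    rw [prod_insert ha, ← ih (hA.subset (by simp)) (fun i hi => hp i (mem_insert_of_mem hi)),
      ← density_and (hp a (mem_insert_self a I)) hI hdisj]
    simp only [forall_mem_insert]

theorem density_not (p : (ε → Bool) → Prop) : density (fun c => ¬ p c) = 1 - density p := by
  classical
  have h := card_filter_add_card_filter_not (s := (univ : Finset (ε → Bool))) (p := p)
  rw [card_univ, Fintype.card_fun, Fintype.card_bool] at h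
  simp only [density]
  rw [eq_sub_iff_add_eq, ← add_div, div_eq_one_iff_eq (by positivity)]
  exact_mod_cast (add_comm _ _).trans h

theorem density_apply_eq (x : ε) (b : Bool) : density (fun c => c x = b) = 1 / 2 := by
  have hflip : density (fun c => c x = b) = density (fun c => ¬ c x = b) := by
    classical
    simp only [density]
    congr 2
    refine card_nbij' (fun c => update c x (!c x)) (fun c => update c x (!c x)) ?_ ?_ ?_ ?_ <;>
      intro c <;> cases b <;> simp
  linarith [density_not (fun c : ε → Bool => c x = b)]

theorem density_forall_apply_eq {κ : Type*} [Fintype κ] {f : κ → ε} (hf : Injective f)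
    (τ : κ → Bool) : density (fun c => ∀ a, c (f a) = τ a) = (1 / 2) ^ Fintype.card κ := by
  have h := density_forall (p := fun a c => c (f a) = τ a) (A := fun a => {f a}) univ
    (fun a _ b _ hab => Set.disjoint_singleton.mpr (hf.ne hab))
    (fun a _ c c' h => by simp only [h (f a) rfl])
  simpa [density_apply_eq] using h

theorem density_exists_le {ι : Type*} [Fintype ι] (q : ι → (ε → Bool) → Prop) :
    density (fun c => ∃ i, q i c) ≤ ∑ i, density (q i) := by
  classical
  simp only [density, ← sum_div]
  rw [← Nat.cast_sum]
  gcongr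
  refine (card_le_card fun c hc => ?_).trans (card_biUnion_le (s := univ))
  simpa using hc

theorem exists_not_of_density_lt_one {p : (ε → Bool) → Prop} (h : density p < 1) :
    ∃ c, ¬ p c := by
  classical
  by_contra! hp
  simp [density, filter_true_of_mem fun c _ => hp c] at h

end BoolCube

theorem Function.Injective.uncurry_cons {α β : Type*} {s : ℕ} {w : β → α} {v : Fin s → β → α}
    (hw : Injective w) (hv : Injective (uncurry v)) (hwv : ∀ i a b, v i a ≠ w b) :
    Injective (uncurry (Fin.cons w v : Fin (s + 1) → β → α)) := by
  rintro ⟨i, a⟩ ⟨i', a'⟩ h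
  induction i using Fin.cases <;> induction i' using Fin.cases <;>
    simp only [uncurry_apply_pair, Fin.cons_zero, Fin.cons_succ] at h
  · rw [hw h]
  · exact absurd h.symm (hwv _ _ _)
  · exact absurd h (hwv _ _ _)
  · simpa using hv (show uncurry v (_, a) = uncurry v (_, a') from h)

section Copies

variable {V : Type*} (H : Sym2 ℕ → Bool) (c : Sym2 V → Bool)

/-- The pattern `H` colours the pairs of `ℕ`; `v` is an induced copy in `c` of its restriction
to `{0, …, j - 1}`. -/
def IsCopy {j : ℕ} (v : Fin j → V) : Prop :=
  Injective v ∧ ∀ a b, a ≠ b → c s(v a, v b) = H s(↑a, ↑b)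

def Extends {j : ℕ} (v : Fin j → V) (u : V) : Prop :=
  ∀ a, c s(v a, u) = H s(↑a, j)

def AllLargeSetsHaveCopy (j k : ℕ) : Prop :=
  ∀ T : Finset V, k ≤ #T → ∃ v : Fin j → V, IsCopy H c v ∧ ∀ a, v a ∈ T

/-- `W` packs `u` points (`inl`) and `s` pairwise disjoint `j`-tuples (`inr`). -/
def HasObstruction (j u s : ℕ) : Prop :=
  ∃ W : Fin u ⊕ Fin s × Fin j → V, Injective W ∧
    ∀ x i, ¬ Extends H c (fun a => W (.inr (i, a))) (W (.inl x))

variable {H c}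

theorem IsCopy.snoc {j : ℕ} {v : Fin j → V} (hv : IsCopy H c v) {u : V} (hu : u ∉ Set.range v)
    (hext : Extends H c v u) : IsCopy H c (Fin.snoc v u : Fin (j + 1) → V) := by
  refine ⟨Fin.snoc_injective_iff.mpr ⟨hv.1, hu⟩, fun a b hab => ?_⟩
  induction a using Fin.lastCases <;> induction b using Fin.lastCases
  · exact absurd rfl hab
  · simpa [Sym2.eq_swap] using hext _
  · simpa using hext _
  · simpa using hv.2 _ _ (fun h => hab (by rw [h]))

theorem AllLargeSetsHaveCopy.mono {j k k' : ℕ} (h : AllLargeSetsHaveCopy H c j k) (hk : k ≤ k') :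
    AllLargeSetsHaveCopy H c j k' :=
  fun T hT => h T (hk.trans hT)

theorem allLargeSetsHaveCopy_zero : AllLargeSetsHaveCopy H c 0 0 :=
  fun _ _ => ⟨Fin.elim0, ⟨fun a => a.elim0, fun a => a.elim0⟩, fun a => a.elim0⟩

theorem AllLargeSetsHaveCopy.exists_disjoint_copies [DecidableEq V] {j k : ℕ}
    (h : AllLargeSetsHaveCopy H c j k) :
    ∀ (s : ℕ) (T : Finset V), k + j * s ≤ #T → ∃ v : Fin s → Fin j → V,
      (∀ i, IsCopy H c (v i)) ∧ Injective (uncurry v) ∧ ∀ i a, v i a ∈ T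
  | 0, _, _ => ⟨Fin.elim0, fun i => i.elim0, fun x => x.1.elim0, fun i => i.elim0⟩
  | s + 1, T, hT => by
    obtain ⟨w, hw, hwT⟩ := h T (by rw [Nat.mul_succ] at hT; omega)
    have hcard : k + j * s ≤ #(T \ univ.image w) := by
      have := le_card_sdiff (univ.image w) T
      have := card_image_le (s := univ) (f := w)
      rw [card_univ, Fintype.card_fin] at this
      rw [Nat.mul_succ] at hT
      omega
    obtain ⟨v, hv, hvinj, hvT⟩ := h.exists_disjoint_copies s _ hcard
    refine ⟨Fin.cons w v, Fin.cases hw hv, hw.1.uncurry_cons hvinj fun i a b hab => ?_,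
      Fin.cases hwT fun i a => (mem_sdiff.mp (hvT i a)).1⟩
    exact (mem_sdiff.mp (hvT i a)).2 (mem_image.mpr ⟨b, mem_univ _, hab.symm⟩)

theorem AllLargeSetsHaveCopy.succ [DecidableEq V] {j k u s : ℕ}
    (h : AllLargeSetsHaveCopy H c j k) (hobs : ¬ HasObstruction H c j u s) :
    AllLargeSetsHaveCopy H c (j + 1) (k + j * s + u) := by
  intro T hT
  let f : Fin u → V := fun x => T.equivFin.symm (Fin.castLE (by omega) x)
  have hf : Injective f := Subtype.val_injective.comp
    (T.equivFin.symm.injective.comp (Fin.castLE_injective _))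
  have hfT : ∀ x, f x ∈ T := fun x => (T.equivFin.symm _).2
  have hcard : k + j * s ≤ #(T \ univ.image f) := by
    have := le_card_sdiff (univ.image f) T
    rw [card_image_of_injective _ hf, card_univ, Fintype.card_fin] at this
    omega
  obtain ⟨v, hv, hvinj, hvT⟩ := h.exists_disjoint_copies s _ hcard
  have hvf : ∀ i a x, v i a ≠ f x := fun i a x hax =>
    (mem_sdiff.mp (hvT i a)).2 (mem_image.mpr ⟨x, mem_univ _, hax.symm⟩)
  simp only [HasObstruction, not_exists, not_and, not_forall, not_not] at hobs
  obtain ⟨x, i, hext⟩ := hobs (Sum.elim f (uncurry v))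
    (hf.sumElim hvinj fun x ⟨i, a⟩ hxa => hvf i a x hxa.symm)
  refine ⟨Fin.snoc (v i) (f x), (hv i).snoc ?_ hext, fun a => ?_⟩
  · rintro ⟨a, ha⟩; exact hvf i a x ha
  · induction a using Fin.lastCases
    · simpa using hfT x
    · simpa using (mem_sdiff.mp (hvT i _)).1

theorem allLargeSetsHaveCopy_of_forall_not_hasObstruction [DecidableEq V] {m K : ℕ}
    (h : ∀ j < m, ¬ HasObstruction H c j K K) :
    ∀ j ≤ m, AllLargeSetsHaveCopy H c j (j * m * K)
  | 0, _ => by simpa using allLargeSetsHaveCopy_zero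
  | j + 1, hj => by
    refine ((allLargeSetsHaveCopy_of_forall_not_hasObstruction h j (by omega)).succ
      (h j (by omega))).mono ?_
    -- `j m K + j K + K ≤ (j + 1) m K` because `j < m`
    nlinarith

end Copies

theorem one_sub_half_pow_nonneg (j : ℕ) : (0 : ℝ) ≤ 1 - (1 / 2) ^ j :=
  sub_nonneg.mpr (pow_le_one₀ (by norm_num) (by norm_num))

section Counting

open BoolCube

variable {V : Type*} [Fintype V] [DecidableEq V] (H : Sym2 ℕ → Bool)

theorem density_extends {j : ℕ} {v : Fin j → V} (hv : Injective v) (u : V) :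
    density (fun c => Extends H c v u) = (1 / 2) ^ j := by
  simpa [Extends] using density_forall_apply_eq (f := fun a => s(v a, u))
    (fun a b h => hv (Sym2.congr_left.mp h)) (fun a => H s(↑a, j))

theorem density_obstructed {j u s : ℕ} {W : Fin u ⊕ Fin s × Fin j → V} (hW : Injective W) :
    density (fun c => ∀ x i, ¬ Extends H c (fun a => W (.inr (i, a))) (W (.inl x))) =
      (1 - (1 / 2) ^ j) ^ (u * s) := by
  have h := density_forall
    (p := fun (z : Fin u × Fin s) c => ¬ Extends H c (fun a => W (.inr (z.2, a))) (W (.inl z.1)))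
    (A := fun z => Set.range fun a => s(W (.inr (z.2, a)), W (.inl z.1))) univ ?_ ?_
  · have hz : ∀ z : Fin u × Fin s, density (fun c =>
        Extends H c (fun a => W (.inr (z.2, a))) (W (.inl z.1))) = (1 / 2) ^ j := fun z =>
      density_extends H (hW.comp (Sum.inr_injective.comp (Prod.mk_right_injective _))) _
    simp only [density_not, hz, prod_const, card_univ, Fintype.card_prod, Fintype.card_fin] at h
    simpa [Prod.forall] using h
  · intro z _ z' _ hzz'
    refine Set.disjoint_left.mpr ?_
    rintro _ ⟨a, rfl⟩ ⟨a', h⟩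
    rcases Sym2.eq_iff.mp h with ⟨h₁, h₂⟩ | ⟨h₁, _⟩
    · simp only [hW.eq_iff, Sum.inr.injEq, Prod.mk.injEq, Sum.inl.injEq] at h₁ h₂
      exact hzz' (Prod.ext h₂.symm h₁.1.symm)
    · simpa using hW h₁
  · intro z _ c c' h
    have hc : ∀ a, c s(W (.inr (z.2, a)), W (.inl z.1)) =
        c' s(W (.inr (z.2, a)), W (.inl z.1)) := fun a => h _ ⟨a, rfl⟩
    simp only [Extends, hc]

theorem density_hasObstruction_le (j u s : ℕ) :
    density (fun c : Sym2 V → Bool => HasObstruction H c j u s) ≤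
      (Fintype.card V : ℝ) ^ (u + s * j) * (1 - (1 / 2) ^ j) ^ (u * s) := by
  refine (density_exists_le _).trans ?_
  calc _ ≤ ∑ _W : Fin u ⊕ Fin s × Fin j → V, ((1 : ℝ) - (1 / 2) ^ j) ^ (u * s) := by
        refine sum_le_sum fun W _ => ?_
        by_cases hW : Injective W
        · simp [hW, density_obstructed H hW]
        · simpa [hW, density] using pow_nonneg (one_sub_half_pow_nonneg j) (u * s)
    _ = _ := by simp

theorem exists_colouring_allLargeSetsHaveCopy [Nonempty V] {m K : ℕ}
    (h : m * (Fintype.card V : ℝ) ^ (m * K) * (1 - (1 / 2) ^ m) ^ (K * K) < 1) :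
    ∃ c : Sym2 V → Bool, AllLargeSetsHaveCopy H c m (m * m * K) := by
  have hdens :
      density (fun c : Sym2 V → Bool => ∃ j : Fin m, HasObstruction H c j K K) < 1 := by
    refine lt_of_le_of_lt ?_ h
    calc _ ≤ ∑ j : Fin m, density (fun c : Sym2 V → Bool => HasObstruction H c j K K) :=
          density_exists_le _
      _ ≤ ∑ _j : Fin m, (Fintype.card V : ℝ) ^ (m * K) * (1 - (1 / 2) ^ m) ^ (K * K) := by
        refine sum_le_sum fun j _ => (density_hasObstruction_le H _ _ _).trans ?_
        have hj := j.2
        refine mul_le_mul (pow_le_pow_right₀ (by exact_mod_cast Fintype.card_pos) (by nlinarith))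
          (pow_le_pow_left₀ (one_sub_half_pow_nonneg j) ?_ _)
          (pow_nonneg (one_sub_half_pow_nonneg j) _) (by positivity)
        exact sub_le_sub_left (pow_le_pow_of_le_one (by norm_num) (by norm_num) hj.le) 1
      _ = _ := by simp [mul_assoc]
  obtain ⟨c, hc⟩ := exists_not_of_density_lt_one hdens
  exact ⟨c, allLargeSetsHaveCopy_of_forall_not_hasObstruction
    (fun j hj hobs => hc ⟨⟨j, hj⟩, hobs⟩) m le_rfl⟩

end Counting

section Metric

theorem isMetricDist_of_one_le_of_le_two {α : Type*} {d : α → α → ℝ} (h0 : ∀ x, d x x = 0)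
    (hsymm : ∀ x y, d x y = d y x) (h12 : ∀ x y, x ≠ y → 1 ≤ d x y ∧ d x y ≤ 2) :
    IsMetricDist d := by
  have hnonneg : ∀ x y, 0 ≤ d x y := fun x y => by
    by_cases hxy : x = y
    · simp [hxy, h0]
    · linarith [(h12 x y hxy).1]
  refine ⟨fun x y => ⟨fun h => ?_, fun h => h ▸ h0 x⟩, hsymm, fun x y z => ?_⟩
  · by_contra hxy
    linarith [(h12 x y hxy).1]
  by_cases hxz : x = z
  · rw [hxz, h0]; linarith [hnonneg z y, hnonneg y z]
  by_cases hxy : x = y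
  · simp [hxy, h0]
  by_cases hyz : y = z
  · simp [hyz, h0]
  linarith [(h12 x z hxz).2, (h12 x y hxy).1, (h12 y z hyz).1]

theorem IsMetricDist.restrict {α : Type*} {d : α → α → ℝ} (h : IsMetricDist d) (s : Set α) :
    IsMetricDist (fun x y : s => d x.1 y.1) :=
  ⟨fun x y => (h.1 x y).trans Subtype.ext_iff.symm, fun x y => h.2.1 x y,
    fun x y z => h.2.2 x y z⟩

variable {V : Type*} [DecidableEq V]

noncomputable def colourDist (c : Sym2 V → Bool) (x y : V) : ℝ :=
  if x = y then 0 else if c s(x, y) then 1 else 2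

theorem isMetricDist_colourDist (c : Sym2 V → Bool) : IsMetricDist (colourDist c) := by
  refine isMetricDist_of_one_le_of_le_two (by simp [colourDist])
    (fun x y => by simp only [colourDist, Sym2.eq_swap (a := x), eq_comm (a := x)])
    fun x y hxy => ?_
  simp only [colourDist, hxy, if_false]
  split <;> norm_num

noncomputable def distPattern {M : Type*} {m : ℕ} (d : M → M → ℝ) (e : Fin m → M) :
    Sym2 ℕ → Bool :=
  fun z => decide (∃ a b : Fin m, z = s(↑a, ↑b) ∧ d (e a) (e b) = 1)

theorem colourDist_eq_of_isCopy {M : Type*} {m : ℕ} {d : M → M → ℝ} (hd : IsMetricDist d)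
    (h12 : ∀ x y, x ≠ y → d x y = 1 ∨ d x y = 2) {e : Fin m → M} (he : Injective e)
    {c : Sym2 V → Bool} {v : Fin m → V} (hv : IsCopy (distPattern d e) c v) (a b : Fin m) :
    colourDist c (v a) (v b) = d (e a) (e b) := by
  by_cases hab : a = b
  · simp [colourDist, hab, (hd.1 _ _).mpr rfl]
  have hpat : distPattern d e s(↑a, ↑b) = decide (d (e a) (e b) = 1) := by
    refine decide_eq_decide.mpr ⟨fun ⟨a', b', h, h'⟩ => ?_, fun h => ⟨a, b, rfl, h⟩⟩
    rcases Sym2.eq_iff.mp h with ⟨ha, hb⟩ | ⟨ha, hb⟩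
    · rwa [Fin.ext ha, Fin.ext hb]
    · rwa [Fin.ext ha, Fin.ext hb, hd.2.1]
  rw [colourDist, if_neg (hv.1.ne hab), hv.2 a b hab, hpat]
  rcases h12 _ _ (he.ne hab) with h | h <;> simp [h]

end Metric

def IsometryInvariant (P : (α : Type) → (α → α → ℝ) → Prop) : Prop :=
  ∀ (α β : Type) (dα : α → α → ℝ) (dβ : β → β → ℝ),
    IsMetricDist dα → IsMetricDist dβ → P α dα →
    (∃ f : α → β, Function.Bijective f ∧ ∀ x y, dβ (f x) (f y) = dα x y) → P β dβ

def Hereditary (P : (α : Type) → (α → α → ℝ) → Prop) : Prop :=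
  ∀ (α : Type) (dα : α → α → ℝ), IsMetricDist dα → P α dα →
    ∀ s : Set α, P s (fun x y => dα x.1 y.1)

theorem IsometryInvariant.of_isometric_embedding {P : (α : Type) → (α → α → ℝ) → Prop}
    (hIso : IsometryInvariant P) (hHer : Hereditary P) {α β : Type} {dα : α → α → ℝ}
    {dβ : β → β → ℝ} (hα : IsMetricDist dα) (hβ : IsMetricDist dβ) (hP : P α dα) {f : β → α}
    (hf : Injective f) (hd : ∀ x y, dα (f x) (f y) = dβ x y) : P β dβ := by
  refine hIso _ β _ dβ (hα.restrict (Set.range f)) hβ (hHer α dα hα hP (Set.range f))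
    ⟨(Equiv.ofInjective f hf).symm, Equiv.bijective _, fun x y => ?_⟩
  simp only [← hd, Equiv.apply_ofInjective_symm]

theorem mul_pow_mul_pow_lt_one {m N K : ℕ} (hN : 2 ≤ N) {γ : ℝ} (hγ : 0 < γ)
    (hK : 2 * m * Real.log N ≤ K * -Real.log γ) : m * (N : ℝ) ^ (m * K) * γ ^ (K * K) < 1 := by
  rcases Nat.eq_zero_or_pos m with rfl | hm
  · simp
  have hN1 : (1 : ℝ) < N := by exact_mod_cast hN
  have hK1 : 0 < K := by
    have : 0 < 2 * m * Real.log N := by have := Real.log_pos hN1; positivity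
    by_contra! hK0
    simp only [Nat.le_zero.mp hK0, CharP.cast_eq_zero, zero_mul] at hK
    linarith
  have hγK : γ ^ K * (N : ℝ) ^ (2 * m) ≤ 1 := by
    rw [← Real.log_nonpos_iff (by positivity), Real.log_mul (by positivity) (by positivity),
      Real.log_pow, Real.log_pow]
    push_cast
    linarith
  have hmN : (m : ℝ) < (N : ℝ) ^ (m * K) := by
    exact_mod_cast Nat.lt_two_pow_self.trans_le ((Nat.pow_le_pow_left hN m).trans
      (Nat.pow_le_pow_right (by omega) (Nat.le_mul_of_pos_right m hK1)))
  calc m * (N : ℝ) ^ (m * K) * γ ^ (K * K)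
      = m / (N : ℝ) ^ (m * K) * (γ ^ K * (N : ℝ) ^ (2 * m)) ^ K := by
        field_simp
        ring
    _ ≤ m / (N : ℝ) ^ (m * K) * 1 := by gcongr; exact pow_le_one₀ (by positivity) hγK
    _ < 1 := by rwa [mul_one, div_lt_one (by positivity)]

/-- With `K = ⌈2m log n / -log (1 - 2⁻ᵐ)⌉`, a colouring without obstructions exists and then
every set of `m² K ≤ copyConstant m * log n` points contains a copy; the final `+ 1` only keeps the
constant positive when `m = 0`. -/
noncomputable def copyConstant (m : ℕ) : ℝ :=
  m ^ 2 * (2 * m / -Real.log (1 - (1 / 2) ^ m) + 1) + 1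

theorem neg_log_one_sub_half_pow_nonneg (m : ℕ) : 0 ≤ -Real.log (1 - (1 / 2) ^ m) :=
  neg_nonneg.mpr (Real.log_nonpos (one_sub_half_pow_nonneg m) (by simp))

theorem copyConstant_pos (m : ℕ) : 0 < copyConstant m := by
  have := div_nonneg (by positivity : (0 : ℝ) ≤ 2 * m) (neg_log_one_sub_half_pow_nonneg m)
  exact add_pos_of_nonneg_of_pos (mul_nonneg (by positivity) (by linarith)) one_pos

theorem exists_colouring_forall_copyConstant_mul_log_le (H : Sym2 ℕ → Bool) (m : ℕ) {n : ℕ}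
    (hn : 3 ≤ n) : ∃ c : Sym2 (Fin n) → Bool, ∀ T : Finset (Fin n),
      copyConstant m * Real.log n ≤ #T → ∃ v : Fin m → Fin n, IsCopy H c v ∧ ∀ a, v a ∈ T := by
  set γ : ℝ := 1 - (1 / 2) ^ m
  set A : ℝ := 2 * m / -Real.log γ
  have hA : 0 ≤ A := div_nonneg (by positivity) (neg_log_one_sub_half_pow_nonneg m)
  have hlog : 1 ≤ Real.log n := by
    rw [Real.le_log_iff_exp_le (by positivity)]
    have : (3 : ℝ) ≤ n := by exact_mod_cast hn
    exact Real.exp_one_lt_d9.le.trans (by linarith)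
  set K := ⌈A * Real.log n⌉₊
  have hsmall : (m : ℝ) * (Fintype.card (Fin n) : ℝ) ^ (m * K) * γ ^ (K * K) < 1 := by
    rcases Nat.eq_zero_or_pos m with hm | hm
    · simp [hm]
    have hγ : 0 < γ := sub_pos.mpr (pow_lt_one₀ (by norm_num) (by norm_num) hm.ne')
    have hL : 0 < -Real.log γ := neg_pos.mpr (Real.log_neg hγ (by simp [γ]))
    refine mul_pow_mul_pow_lt_one (by simpa using hn.trans' (by norm_num)) hγ ?_
    calc 2 * m * Real.log (Fintype.card (Fin n)) = A * Real.log n * -Real.log γ := by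
          rw [Fintype.card_fin, mul_right_comm A, show A * -Real.log γ = 2 * m from
            div_mul_cancel₀ _ hL.ne']
      _ ≤ K * -Real.log γ := mul_le_mul_of_nonneg_right (Nat.le_ceil _) hL.le
  have : Nonempty (Fin n) := ⟨⟨0, by omega⟩⟩
  obtain ⟨c, hc⟩ := exists_colouring_allLargeSetsHaveCopy H hsmall
  refine ⟨c, fun T hT => hc T ?_⟩
  have hK : (K : ℝ) ≤ (A + 1) * Real.log n := by
    nlinarith [Nat.ceil_lt_add_one (mul_nonneg hA (by linarith) : 0 ≤ A * Real.log n)]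
  have hC : copyConstant m = m ^ 2 * (A + 1) + 1 := rfl
  have : (m * m * K : ℝ) ≤ #T := le_trans (by rw [hC]; nlinarith) hT
  exact_mod_cast this

theorem stmt7 (P : (α : Type) → (α → α → ℝ) → Prop)
    (hIso : ∀ (α β : Type) (dα : α → α → ℝ) (dβ : β → β → ℝ),
      IsMetricDist dα → IsMetricDist dβ → P α dα →
      (∃ f : α → β, Function.Bijective f ∧ ∀ x y, dβ (f x) (f y) = dα x y) →
      P β dβ)
    (hHer : ∀ (α : Type) (dα : α → α → ℝ), IsMetricDist dα → P α dα →
      ∀ s : Set α, P s (fun x y => dα x.1 y.1))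
    (M₀ : Type) [Fintype M₀] (d₀ : M₀ → M₀ → ℝ) (hd₀ : IsMetricDist d₀)
    (h12 : ∀ x y : M₀, x ≠ y → d₀ x y = 1 ∨ d₀ x y = 2)
    (hM₀ : ¬ P M₀ d₀) :
    ∃ C : ℝ, 0 < C ∧ ∀ N : ℕ, ∃ n : ℕ, N ≤ n ∧
      ∃ d : Fin n → Fin n → ℝ, IsMetricDist d ∧
        ∀ S : Set (Fin n), C * Real.log n ≤ S.ncard →
          ¬ P S (fun x y => d x.1 y.1) := by
  classical
  let e : Fin (Fintype.card M₀) ≃ M₀ := (Fintype.equivFin M₀).symm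
  refine ⟨copyConstant (Fintype.card M₀), copyConstant_pos _, fun N => ?_⟩
  obtain ⟨c, hc⟩ := exists_colouring_forall_copyConstant_mul_log_le (distPattern d₀ e) _
    (le_max_right N 3)
  refine ⟨max N 3, le_max_left _ _, colourDist c, isMetricDist_colourDist c,
    fun S hS hP => hM₀ ?_⟩
  obtain ⟨v, hv, hvS⟩ := hc S.toFinset (by rwa [← Set.ncard_eq_toFinset_card'])
  exact IsometryInvariant.of_isometric_embedding hIso hHer
    ((isMetricDist_colourDist c).restrict S) hd₀ hP
    (f := fun x => ⟨v (e.symm x), by simpa using hvS _⟩)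
    (fun x y h => e.symm.injective (hv.1 (congrArg Subtype.val h)))
    (fun x y => by
      simpa using colourDist_eq_of_isCopy hd₀ h12 e.injective hv (e.symm x) (e.symm y))
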